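/- For α > 0 and η ∈ (1/2, 1), define f(α, η) = η·Φ(α/2 + (1/α)ln(η/(1-η))) + (1-η)·Φ(α/2 - (1/α)ln(η/(1-η))), where Φ is the standard Gaussian CDF. Then f is strictly increasing in η: if 1/2 < η < η' < 1, then f(α, η') > f(α, η). -/

import Mathlib

/-! The derivative of `η ↦ f(α, η)` is `Φ(α/2 + L/α) - Φ(α/2 - L/α)` with `L = log (η / (1 - η))`:
the terms coming from the dependence of the threshold `L/α` on `η` cancel, because at the Bayes
threshold the weighted class densities `η φ(α/2 + L/α)` and `(1 - η) φ(α/2 - L/α)` coincide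
(an envelope-theorem argument). For `η > 1/2` we have `L > 0`, so the derivative is positive since
`Φ` is strictly increasing. -/

open MeasureTheory ProbabilityTheory Set
open scoped NNReal

namespace ProbabilityTheory

variable {μ : ℝ} {v : ℝ≥0}

lemma continuous_gaussianPDFReal (μ : ℝ) (v : ℝ≥0) : Continuous (gaussianPDFReal μ v) := by
  unfold gaussianPDFReal; fun_prop

lemma cdf_gaussianReal_eq_integral (hv : v ≠ 0) (x : ℝ) :
    cdf (gaussianReal μ v) x = ∫ t in Iic x, gaussianPDFReal μ v t := by
  rw [cdf_eq_real, measureReal_def, gaussianReal_apply_eq_integral μ hv,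
    ENNReal.toReal_ofReal (integral_nonneg fun t => gaussianPDFReal_nonneg μ v t)]

lemma cdf_gaussianReal_sub_cdf (hv : v ≠ 0) (a b : ℝ) :
    cdf (gaussianReal μ v) b - cdf (gaussianReal μ v) a = ∫ t in a..b, gaussianPDFReal μ v t := by
  have hint := integrable_gaussianPDFReal μ v
  rw [cdf_gaussianReal_eq_integral hv, cdf_gaussianReal_eq_integral hv,
    intervalIntegral.integral_Iic_sub_Iic hint.integrableOn hint.integrableOn]

lemma hasDerivAt_cdf_gaussianReal (hv : v ≠ 0) (x : ℝ) :
    HasDerivAt (cdf (gaussianReal μ v)) (gaussianPDFReal μ v x) x := by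
  have hcont := continuous_gaussianPDFReal μ v
  have hFTC := (intervalIntegral.integral_hasDerivAt_right (a := 0) (b := x)
    (integrable_gaussianPDFReal μ v).intervalIntegrable
    hcont.stronglyMeasurable.stronglyMeasurableAtFilter hcont.continuousAt).const_add
    (cdf (gaussianReal μ v) 0)
  refine hFTC.congr_of_eventuallyEq (Filter.Eventually.of_forall fun y => ?_)
  simp only [← cdf_gaussianReal_sub_cdf hv 0 y, add_sub_cancel]

lemma strictMono_cdf_gaussianReal (hv : v ≠ 0) : StrictMono (cdf (gaussianReal μ v)) :=
  strictMono_of_hasDerivAt_pos (hasDerivAt_cdf_gaussianReal hv)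
    (gaussianPDFReal_pos μ v · hv)

lemma gaussianPDFReal_zero_one_add (a b : ℝ) :
    gaussianPDFReal 0 1 (a + b) = gaussianPDFReal 0 1 (a - b) * Real.exp (-(2 * a * b)) := by
  simp only [gaussianPDFReal, NNReal.coe_one, sub_zero, mul_assoc, ← Real.exp_add]
  congr 3
  ring

end ProbabilityTheory

noncomputable def logOdds (η : ℝ) : ℝ := Real.log (η / (1 - η))

lemma hasDerivAt_logOdds {s : ℝ} (hs0 : s ≠ 0) (hs1 : s ≠ 1) :
    HasDerivAt logOdds (1 / (s * (1 - s))) s := by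
  have h1s : 1 - s ≠ 0 := sub_ne_zero.2 (Ne.symm hs1)
  have h : HasDerivAt logOdds ((1 * (1 - s) - s * (0 - 1)) / (1 - s) ^ 2 / (s / (1 - s))) s :=
    ((hasDerivAt_id' s).div ((hasDerivAt_const s 1).sub (hasDerivAt_id' s)) h1s).log
      (div_ne_zero hs0 h1s)
  convert h using 1
  field_simp
  ring

lemma logOdds_pos {η : ℝ} (hη : 1 / 2 < η) (hη1 : η < 1) : 0 < logOdds η :=
  Real.log_pos ((one_lt_div (by linarith)).2 (by linarith))

lemma exp_neg_logOdds {η : ℝ} (hη0 : 0 < η) (hη1 : η < 1) :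
    Real.exp (-logOdds η) = (1 - η) / η := by
  have h1η : 0 < 1 - η := by linarith
  rw [logOdds, ← Real.log_inv, Real.exp_log (by positivity), inv_div]

noncomputable def bayesSeparability (α η : ℝ) : ℝ :=
  η * cdf (gaussianReal 0 1) (α / 2 + (1 / α) * logOdds η) +
    (1 - η) * cdf (gaussianReal 0 1) (α / 2 - (1 / α) * logOdds η)

section bayesSeparability

variable {α s : ℝ}

lemma mul_gaussianPDFReal_at_bayes_threshold (hα : α ≠ 0) (hs0 : 0 < s) (hs1 : s < 1) :
    s * gaussianPDFReal 0 1 (α / 2 + (1 / α) * logOdds s) =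
      (1 - s) * gaussianPDFReal 0 1 (α / 2 - (1 / α) * logOdds s) := by
  rw [gaussianPDFReal_zero_one_add, show 2 * (α / 2) * (1 / α * logOdds s) = logOdds s by
    field_simp, exp_neg_logOdds hs0 hs1]
  field_simp

lemma hasDerivAt_bayesSeparability (hα : α ≠ 0) (hs0 : 0 < s) (hs1 : s < 1) :
    HasDerivAt (bayesSeparability α)
      (cdf (gaussianReal 0 1) (α / 2 + (1 / α) * logOdds s) -
        cdf (gaussianReal 0 1) (α / 2 - (1 / α) * logOdds s)) s := by
  have hL := (hasDerivAt_logOdds hs0.ne' hs1.ne).const_mul (1 / α)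
  have hp := (hasDerivAt_cdf_gaussianReal (μ := 0) one_ne_zero _).comp s (hL.const_add (α / 2))
  have hq := (hasDerivAt_cdf_gaussianReal (μ := 0) one_ne_zero _).comp s (hL.const_sub (α / 2))
  refine HasDerivAt.congr_deriv (f := bayesSeparability α)
    (((hasDerivAt_id' s).mul hp).add (((hasDerivAt_const s 1).sub (hasDerivAt_id' s)).mul hq)) ?_
  simp only [Function.comp_apply, Pi.sub_apply]
  linear_combination (1 / α * (1 / (s * (1 - s)))) *
    mul_gaussianPDFReal_at_bayes_threshold hα hs0 hs1

lemma strictMonoOn_bayesSeparability (hα : 0 < α) :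
    StrictMonoOn (bayesSeparability α) (Ico (1 / 2) 1) := by
  have hderiv (s : ℝ) (hs : s ∈ Ico (1 / 2 : ℝ) 1) :=
    hasDerivAt_bayesSeparability hα.ne' (by linarith [hs.1]) hs.2
  refine strictMonoOn_of_hasDerivWithinAt_pos (convex_Ico (1 / 2 : ℝ) 1)
    (fun s hs => (hderiv s hs).continuousAt.continuousWithinAt)
    (fun s hs => (hderiv s (interior_subset hs)).hasDerivWithinAt) fun s hs => ?_
  rw [interior_Ico] at hs
  have : 0 < 1 / α * logOdds s := mul_pos (by positivity) (logOdds_pos hs.1 hs.2)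
  exact sub_pos.2 (strictMono_cdf_gaussianReal one_ne_zero (by linarith))

end bayesSeparability

theorem stmt5 (f : ℝ → ℝ → ℝ)
    (hf : ∀ α η, f α η =
      η * cdf (gaussianReal 0 1) (α / 2 + (1 / α) * Real.log (η / (1 - η))) +
      (1 - η) * cdf (gaussianReal 0 1) (α / 2 - (1 / α) * Real.log (η / (1 - η))))
    (α : ℝ) (hα : 0 < α)
    (η η' : ℝ) (hη : 1 / 2 < η) (hηη' : η < η') (hη' : η' < 1) :
    f α η' > f α η := by
  rw [hf, hf]
  exact strictMonoOn_bayesSeparability hα ⟨hη.le, hηη'.trans hη'⟩ ⟨by linarith, hη'⟩ hηη'
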